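/- (Correctness of the skip trick) Let A and B be strings of length n over a finite alphabet Σ, let a ∈ Σ be a letter, and let ℓ satisfy 1 ≤ ℓ ≤ n. Let max_A denote the maximum of |u|_a over all length-ℓ factors u of A, and let min_B denote the minimum of |v|_a over all length-ℓ factors v of B. If g = min_B − max_A > 0, then for every ℓ' with ℓ − g < ℓ' ≤ ℓ, the strings A and B have no common abelian factor of length ℓ'. -/

import Mathlib

/-!
A common abelian factor of length `ℓ' ≤ ℓ` is a factor `u` of `A` and a factor `v` of `B`
with `|u|ₐ = |v|ₐ`. Extend both to length-`ℓ` factors `u ⊆ w₁` of `A` and `v ⊆ w₂` of `B`.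
Extending can only add occurrences of `a`, and adds at most `ℓ - ℓ'` of them, so
`minB ≤ |w₂|ₐ ≤ |v|ₐ + (ℓ - ℓ') = |u|ₐ + (ℓ - ℓ') ≤ |w₁|ₐ + (ℓ - ℓ') ≤ maxA + (ℓ - ℓ')`,
i.e. `ℓ' ≤ ℓ - g`.
-/

/-- `A` and `B` have a common abelian factor of length `ℓ`: there exist factors
`u` of `A` and `v` of `B`, both of length `ℓ`, with equal Parikh vectors. -/
def HasCommonAbelianFactor {α : Type*} [DecidableEq α] (A B : List α) (ℓ : ℕ) : Prop :=
  ∃ u v : List α, u <:+: A ∧ v <:+: B ∧ u.length = ℓ ∧ v.length = ℓ ∧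
    ∀ c : α, u.count c = v.count c

/-- The set of numbers of occurrences of the letter `a` in length-`ℓ` factors of `S`. -/
def factorLetterCounts {α : Type*} [DecidableEq α] (S : List α) (a : α) (ℓ : ℕ) : Set ℕ :=
  {k | ∃ w : List α, w <:+: S ∧ w.length = ℓ ∧ w.count a = k}

namespace List

variable {α : Type*}

theorem IsInfix.exists_infix_length_eq {u A : List α} {ℓ : ℕ} (hu : u <:+: A)
    (hul : u.length ≤ ℓ) (hℓA : ℓ ≤ A.length) :
    ∃ w : List α, w <:+: A ∧ w.length = ℓ ∧ u <:+: w := by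
  obtain ⟨s, t, rfl⟩ := hu
  by_cases hright : ℓ ≤ u.length + t.length
  · refine ⟨u ++ t.take (ℓ - u.length), ⟨s, t.drop (ℓ - u.length), by simp⟩, ?_,
      infix_append [] _ _⟩
    simp only [length_append, length_take]
    omega
  · -- `t` is too short: take all of `t` and the missing letters from the end of `s`.
    set k := ℓ - (u.length + t.length)
    refine ⟨s.drop (s.length - k) ++ u ++ t, ⟨s.take (s.length - k), [], ?_⟩, ?_,
      infix_append _ _ _⟩
    · simp only [append_nil, ← append_assoc, take_append_drop]
    · simp only [length_append, length_drop] at hℓA ⊢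
      omega

theorem IsInfix.count_le_count_add [BEq α] {u w : List α} (h : u <:+: w) (a : α) :
    w.count a ≤ u.count a + (w.length - u.length) := by
  obtain ⟨s, t, rfl⟩ := h
  have hs : s.count a ≤ s.length := count_le_length
  have ht : t.count a ≤ t.length := count_le_length
  simp only [count_append, length_append]
  omega

end List

section factorLetterCounts

variable {α : Type*} [DecidableEq α] {S w : List α} {a : α} {ℓ : ℕ}

theorem bddAbove_factorLetterCounts : BddAbove (factorLetterCounts S a ℓ) := by
  refine ⟨ℓ, ?_⟩
  rintro _ ⟨w, -, rfl, rfl⟩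
  exact List.count_le_length

theorem count_le_sSup_factorLetterCounts (hw : w <:+: S) (hwl : w.length ≤ ℓ)
    (hℓS : ℓ ≤ S.length) : w.count a ≤ sSup (factorLetterCounts S a ℓ) := by
  obtain ⟨w', hw'S, hw'l, hww'⟩ := hw.exists_infix_length_eq hwl hℓS
  calc w.count a ≤ w'.count a := hww'.sublist.count_le a
    _ ≤ sSup (factorLetterCounts S a ℓ) :=
      le_csSup bddAbove_factorLetterCounts ⟨w', hw'S, hw'l, rfl⟩

theorem sInf_factorLetterCounts_le (hw : w <:+: S) (hwl : w.length ≤ ℓ)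
    (hℓS : ℓ ≤ S.length) :
    sInf (factorLetterCounts S a ℓ) ≤ w.count a + (ℓ - w.length) := by
  obtain ⟨w', hw'S, hw'l, hww'⟩ := hw.exists_infix_length_eq hwl hℓS
  calc sInf (factorLetterCounts S a ℓ) ≤ w'.count a := Nat.sInf_le ⟨w', hw'S, hw'l, rfl⟩
    _ ≤ w.count a + (ℓ - w.length) := hw'l ▸ hww'.count_le_count_add a

end factorLetterCounts

theorem skip_trick_correct_general {α : Type*} [DecidableEq α] (A B : List α) (a : α)
    (n ℓ : ℕ) (hA : A.length = n) (hB : B.length = n) (hℓn : ℓ ≤ n)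
    (maxA minB g : ℕ)
    (hmaxA : maxA = sSup (factorLetterCounts A a ℓ))
    (hminB : minB = sInf (factorLetterCounts B a ℓ))
    (hg : g = minB - maxA) :
    ∀ ℓ' : ℕ, ℓ - g < ℓ' → ℓ' ≤ ℓ → ¬ HasCommonAbelianFactor A B ℓ' := by
  rintro ℓ' hgt hle ⟨u, v, hu, hv, rfl, hvl, hcount⟩
  have hu_le : u.count a ≤ maxA :=
    hmaxA ▸ count_le_sSup_factorLetterCounts hu hle (hA ▸ hℓn)
  have hv_ge : minB ≤ v.count a + (ℓ - u.length) :=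
    hminB ▸ hvl ▸ sInf_factorLetterCounts_le hv (hvl ▸ hle) (hB ▸ hℓn)
  have := hcount a
  omega

/-- Correctness of the skip trick: let `A`, `B` be strings of length `n`, let
`a` be a letter and `1 ≤ ℓ ≤ n`. Let `maxA` be the maximum of `|u|ₐ` over
length-`ℓ` factors `u` of `A` and `minB` the minimum of `|v|ₐ` over length-`ℓ`
factors `v` of `B`. If `g = minB - maxA > 0`, then for every `ℓ'` with
`ℓ - g < ℓ' ≤ ℓ`, the strings `A` and `B` have no common abelian factor of
length `ℓ'`. -/
theorem skip_trick_correct {α : Type*} [DecidableEq α] (A B : List α) (a : α)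
    (n ℓ : ℕ) (hA : A.length = n) (hB : B.length = n) (hℓ1 : 1 ≤ ℓ) (hℓn : ℓ ≤ n)
    (maxA minB g : ℕ)
    (hmaxA : maxA = sSup (factorLetterCounts A a ℓ))
    (hminB : minB = sInf (factorLetterCounts B a ℓ))
    (hg : g = minB - maxA) (hgpos : 0 < g) :
    ∀ ℓ' : ℕ, ℓ - g < ℓ' → ℓ' ≤ ℓ → ¬ HasCommonAbelianFactor A B ℓ' :=
  skip_trick_correct_general A B a n ℓ hA hB hℓn maxA minB g hmaxA hminB hg
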